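/- Let f, g be fuzzy subsets of X and r a fuzzy relation on X over a linear complete residuated lattice, ε ∈ L. Then the following are equivalent: (i) r ∘ f ≤_ε g; (ii) r ∘_ε f ≤_ε g; (iii) r ≤_ε g /_ε f, where (g /_ε f)(a,b) := (f(b) →_ε g(a)). -/

import Mathlib

/-- A linear and complete residuated lattice: a complete linear order carrying a
commutative monoid structure whose unit `1` is the greatest element, together with a
residuum satisfying the adjunction property. -/
class ResiduatedLattice (L : Type*) extends CompleteLinearOrder L, CommMonoid L where
  res : L → L → L
  adjunction : ∀ x y z : L, x * y ≤ z ↔ x ≤ res y z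
  one_eq_top : (1 : L) = ⊤

variable {L : Type*} [ResiduatedLattice L]

/-- `x ≤_ε y` iff `x ≤ y` or `x ≤ ε`. -/
def leE (ε x y : L) : Prop := x ≤ y ∨ x ≤ ε

/-- `x =_ε y` iff `x ≤_ε y` and `y ≤_ε x`. -/
def eqE (ε x y : L) : Prop := leE ε x y ∧ leE ε y x

/-- `x ⊗_ε y` is `x ⊗ y` if `x ⊗ y > ε`, and `ε` otherwise. -/
def mulE (ε x y : L) : L := if ε < x * y then x * y else ε

/-- `x →_ε y := (x ∨ ε) → (y ∨ ε)`. -/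
def resE (ε x y : L) : L := ResiduatedLattice.res (x ⊔ ε) (y ⊔ ε)

/-- `(f ∘_ε r)(a) = ⋁_ε { f(b) ⊗_ε r(b,a) : b ∈ X }`. -/
noncomputable def vecRelCompE {X : Type*} (ε : L) (f : X → L) (r : X → X → L) : X → L :=
  fun a => (⨆ b, mulE ε (f b) (r b a)) ⊔ ε

/-- `(r ∘_ε f)(a) = ⋁_ε { r(a,b) ⊗_ε f(b) : b ∈ X }`. -/
noncomputable def relVecCompE {X : Type*} (ε : L) (r : X → X → L) (f : X → L) : X → L :=
  fun a => (⨆ b, mulE ε (r a b) (f b)) ⊔ ε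

/-- `(r ∘ f)(a) = sup_b r(a,b) ⊗ f(b)`. -/
noncomputable def relVecComp {X : Type*} (r : X → X → L) (f : X → L) : X → L :=
  fun a => ⨆ b, r a b * f b

/-- `(g /_ε f)(a,b) := (f(b) →_ε g(a))`. -/
def divE {X : Type*} (ε : L) (g f : X → L) : X → X → L :=
  fun a b => resE ε (f b) (g a)

/- Every `ε`-notion becomes an ordinary inequality after truncating with `· ⊔ ε`:
`x ≤_ε y` is `x ≤ y ⊔ ε`, `x ⊗_ε y = x ⊗ y ⊔ ε` and `r ∘_ε f = r ∘ f ⊔ ε`. Since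
`x ⊗ ε ≤ ε`, the condition `x ⊗ u ≤ v ⊔ ε` does not change when `u` is replaced by `u ⊔ ε`,
and the adjunction turns it into `x ≤ (u ⊔ ε) → (v ⊔ ε) = u →_ε v`. -/

namespace ResiduatedLattice

instance : IsOrderedMonoid L where
  mul_le_mul_left x y hxy z :=
    (adjunction x z (y * z)).mpr (hxy.trans ((adjunction y z (y * z)).mp le_rfl))

theorem mul_le_left (x y : L) : x * y ≤ x :=
  mul_le_of_le_one_right' (one_eq_top (L := L) ▸ le_top)

end ResiduatedLattice

open ResiduatedLattice

theorem leE_iff_le_sup {ε x y : L} : leE ε x y ↔ x ≤ y ⊔ ε :=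
  le_sup_iff.symm

theorem leE_sup_right_iff {ε x y : L} : leE ε (x ⊔ ε) y ↔ leE ε x y := by
  simp only [leE_iff_le_sup, sup_le_iff, le_sup_right, and_true]

theorem leE_iSup_iff {ι : Sort*} {ε y : L} {h : ι → L} :
    leE ε (⨆ i, h i) y ↔ ∀ i, leE ε (h i) y := by
  simp only [leE_iff_le_sup, iSup_le_iff]

theorem mulE_eq_mul_sup (ε x y : L) : mulE ε x y = x * y ⊔ ε := by
  unfold mulE
  split_ifs with h
  · exact (sup_eq_left.mpr h.le).symm
  · exact (sup_eq_right.mpr (not_lt.mp h)).symm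

theorem le_resE (ε u v : L) : ε ≤ resE ε u v :=
  (adjunction ε (u ⊔ ε) (v ⊔ ε)).mp ((mul_le_left ε _).trans le_sup_right)

theorem leE_resE_iff {ε x u v : L} : leE ε x (resE ε u v) ↔ x * (u ⊔ ε) ≤ v ⊔ ε := by
  rw [leE_iff_le_sup, sup_eq_left.mpr (le_resE ε u v), resE, adjunction]

theorem mul_le_sup_iff_mul_sup_le {ε x u v : L} :
    x * u ≤ v ⊔ ε ↔ x * (u ⊔ ε) ≤ v ⊔ ε := by
  have hxε : x * ε ≤ v ⊔ ε :=
    ((mul_comm x ε).trans_le (mul_le_left ε x)).trans le_sup_right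
  rw [(mul_right_mono (a := x)).map_sup, sup_le_iff]
  exact (and_iff_left hxε).symm

theorem leE_mul_iff_leE_resE {ε x u v : L} :
    leE ε (x * u) v ↔ leE ε x (resE ε u v) := by
  rw [leE_resE_iff, leE_iff_le_sup, mul_le_sup_iff_mul_sup_le]

theorem relVecCompE_eq_relVecComp_sup {X : Type*} (ε : L) (r : X → X → L) (f : X → L)
    (a : X) : relVecCompE ε r f a = relVecComp r f a ⊔ ε := by
  simp only [relVecCompE, relVecComp, mulE_eq_mul_sup]
  refine le_antisymm (sup_le (iSup_le fun b => ?_) le_sup_right)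
    (sup_le_sup_right (iSup_mono fun b => le_sup_left) ε)
  exact sup_le_sup_right (le_iSup (fun b => r a b * f b) b) ε

theorem stmt_9 {X : Type*} (ε : L) (f g : X → L) (r : X → X → L) :
    ((∀ a, leE ε (relVecComp r f a) (g a)) ↔
      (∀ a, leE ε (relVecCompE ε r f a) (g a))) ∧
    ((∀ a, leE ε (relVecCompE ε r f a) (g a)) ↔
      (∀ a b, leE ε (r a b) (divE ε g f a b))) := by
  have truncate : ∀ a, leE ε (relVecCompE ε r f a) (g a) ↔ leE ε (relVecComp r f a) (g a) :=
    fun a => by rw [relVecCompE_eq_relVecComp_sup, leE_sup_right_iff]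
  refine ⟨forall_congr' fun a => (truncate a).symm, ?_⟩
  simp only [truncate, relVecComp, leE_iSup_iff, leE_mul_iff_leE_resE, divE]
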